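/- Let a < b be reals and let ρ : ℝ → ℝ be integrable with support contained in [a,b]. Let n ≥ 1, set μ_k = ∫_ℝ u^k ρ(u) du, and assume the Hankel determinants D_k = det(μ_{i+j})_{0≤i,j≤k−1} are nonzero for all 1 ≤ k ≤ n+1, so that the monic orthogonal polynomials p_0, p_1, ..., p_n with respect to ρ exist; set h_{n−1} = ∫_ℝ p_{n−1}(u)^2 ρ(u) du. Then for every real z ∉ [a,b], p_n(z) · ∫_ℝ (p_{n−1}(u) ρ(u)/(z − u)) du − p_{n−1}(z) · ∫_ℝ (p_n(u) ρ(u)/(z − u)) du = h_{n−1}. (Equivalently, the Riemann–Hilbert matrix Y_n(z) has determinant 1.) -/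

import Mathlib

/-!
Write `Δ_z r = r /ₘ (X - C z)`, so that `r(z) = r(u) + (z - u) (Δ_z r)(u)`. Substituting this
for `p(z)` and `q(z)` cancels the Cauchy kernel and turns the left-hand side into
`∫ (q Δ_z p - p Δ_z q) ρ`. Since `deg Δ_z q < n`, orthogonality of `p` kills the second term;
since `Δ_z p` is monic of degree `n - 1`, it differs from `q` by a polynomial of degree `< n - 1`,
so orthogonality of `q` turns the first term into `∫ q² ρ`.
-/

open MeasureTheory Polynomial

namespace Polynomial

variable {R : Type*} [CommRing R]

lemma eval_sub_eval_eq_mul_eval_divByMonic_X_sub_C (p : R[X]) (z u : R) :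
    p.eval u - p.eval z = (u - z) * (p /ₘ (X - C z)).eval u := by
  have h := congrArg (eval u) (X_sub_C_mul_divByMonic_eq_sub_modByMonic p z)
  rw [modByMonic_X_sub_C_eq_C_eval] at h
  simpa using h.symm

lemma natDegree_divByMonic_X_sub_C [Nontrivial R] (p : R[X]) (z : R) :
    (p /ₘ (X - C z)).natDegree = p.natDegree - 1 := by
  rw [natDegree_divByMonic p (monic_X_sub_C z), natDegree_X_sub_C]

lemma Monic.divByMonic_X_sub_C [IsDomain R] {p : R[X]} (hp : p.Monic) (hdeg : p.natDegree ≠ 0)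
    (z : R) : (p /ₘ (X - C z)).Monic := by
  have hdeg' : p.degree ≠ 0 := by
    rwa [degree_eq_natDegree hp.ne_zero, Nat.cast_ne_zero]
  rw [Monic, leadingCoeff_divByMonic_X_sub_C p hdeg' z, hp.leadingCoeff]

lemma Monic.degree_sub_lt_of_natDegree_eq [Nontrivial R] {r s : R[X]} (hr : r.Monic)
    (hs : s.Monic) (h : r.natDegree = s.natDegree) : (r - s).degree < r.natDegree := by
  have hdeg : r.degree = s.degree := by
    rw [degree_eq_natDegree hr.ne_zero, degree_eq_natDegree hs.ne_zero, h]
  have := degree_sub_lt_left hdeg hr.ne_zero (by rw [hr.leadingCoeff, hs.leadingCoeff])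
  rwa [degree_eq_natDegree hr.ne_zero] at this

end Polynomial

section CompactSupport

variable {μ : Measure ℝ} {K : Set ℝ} {ρ : ℝ → ℝ}

lemma integrable_mul_of_continuousOn (hK : IsCompact K) (hρ : Integrable ρ μ)
    (hsupp : Function.support ρ ⊆ K) {f : ℝ → ℝ} (hf : ContinuousOn f K) :
    Integrable (fun u => f u * ρ u) μ :=
  (integrableOn_iff_integrable_of_support_subset
    ((Function.support_mul_subset_right _ _).trans hsupp)).1
    (hρ.integrableOn.continuousOn_mul hf hK)

lemma integrable_eval_mul_eval_mul (hK : IsCompact K) (hρ : Integrable ρ μ)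
    (hsupp : Function.support ρ ⊆ K) (r s : ℝ[X]) :
    Integrable (fun u => r.eval u * s.eval u * ρ u) μ :=
  integrable_mul_of_continuousOn hK hρ hsupp (f := fun u => r.eval u * s.eval u) (by fun_prop)

lemma integral_eval_mul_eval_mul_eq_zero_of_degree_lt (hK : IsCompact K)
    (hρ : Integrable ρ μ) (hsupp : Function.support ρ ⊆ K) {p r : ℝ[X]} {m : ℕ}
    (hp : ∀ j < m, ∫ u, p.eval u * u ^ j * ρ u ∂μ = 0) (hr : r.degree < m) :
    ∫ u, p.eval u * r.eval u * ρ u ∂μ = 0 := by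
  rcases eq_or_ne r 0 with rfl | hr0
  · simp
  have hrm : r.natDegree < m := (natDegree_lt_iff_degree_lt hr0).2 hr
  have hexpand : ∀ u, p.eval u * r.eval u * ρ u
      = ∑ j ∈ Finset.range m, r.coeff j * (p.eval u * u ^ j * ρ u) := by
    intro u
    rw [eval_eq_sum_range' hrm, Finset.mul_sum, Finset.sum_mul]
    exact Finset.sum_congr rfl fun j _ => by ring
  simp_rw [hexpand]
  rw [integral_finsetSum _ fun j _ =>
    (integrable_mul_of_continuousOn hK hρ hsupp (f := fun u => p.eval u * u ^ j)
      (by fun_prop)).const_mul _]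
  exact Finset.sum_eq_zero fun j hj => by
    rw [integral_const_mul, hp j (Finset.mem_range.1 hj), mul_zero]

lemma integral_eval_mul_eval_mul_eq_of_degree_sub_lt (hK : IsCompact K)
    (hρ : Integrable ρ μ) (hsupp : Function.support ρ ⊆ K) {p r s : ℝ[X]} {m : ℕ}
    (hp : ∀ j < m, ∫ u, p.eval u * u ^ j * ρ u ∂μ = 0) (hrs : (r - s).degree < m) :
    ∫ u, p.eval u * r.eval u * ρ u ∂μ = ∫ u, p.eval u * s.eval u * ρ u ∂μ := by
  rw [← sub_eq_zero, ← integral_sub (integrable_eval_mul_eval_mul hK hρ hsupp p r)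
      (integrable_eval_mul_eval_mul hK hρ hsupp p s),
    ← integral_eval_mul_eval_mul_eq_zero_of_degree_lt hK hρ hsupp hp hrs]
  simp only [eval_sub]
  congr 1 with u
  ring

lemma integrable_eval_mul_div_sub (hK : IsCompact K) (hρ : Integrable ρ μ)
    (hsupp : Function.support ρ ⊆ K) {z : ℝ} (hz : z ∉ K) (r : ℝ[X]) :
    Integrable (fun u => r.eval u * ρ u / (z - u)) μ := by
  have hzu : ∀ u ∈ K, z - u ≠ 0 := fun u hu h => hz (sub_eq_zero.1 h ▸ hu)
  refine (integrable_mul_of_continuousOn hK hρ hsupp (f := fun u => r.eval u / (z - u))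
    (r.continuous.continuousOn.div (by fun_prop) hzu)).congr (.of_forall fun u => ?_)
  ring

lemma eval_mul_integral_div_sub_sub_eval_mul_integral_div_sub (hK : IsCompact K)
    (hρ : Integrable ρ μ) (hsupp : Function.support ρ ⊆ K) {z : ℝ} (hz : z ∉ K) (p q : ℝ[X]) :
    p.eval z * ∫ u, q.eval u * ρ u / (z - u) ∂μ - q.eval z * ∫ u, p.eval u * ρ u / (z - u) ∂μ
      = ∫ u, q.eval u * (p /ₘ (X - C z)).eval u * ρ u ∂μ
        - ∫ u, p.eval u * (q /ₘ (X - C z)).eval u * ρ u ∂μ := by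
  rw [← integral_const_mul, ← integral_const_mul,
    ← integral_sub ((integrable_eval_mul_div_sub hK hρ hsupp hz q).const_mul _)
      ((integrable_eval_mul_div_sub hK hρ hsupp hz p).const_mul _),
    ← integral_sub (integrable_eval_mul_eval_mul hK hρ hsupp _ _)
      (integrable_eval_mul_eval_mul hK hρ hsupp _ _)]
  congr 1 with u
  by_cases hu : ρ u = 0
  · simp [hu]
  have hzu : z - u ≠ 0 := fun h => hz (sub_eq_zero.1 h ▸ hsupp hu)
  have hp : p.eval z = p.eval u + (z - u) * (p /ₘ (X - C z)).eval u := by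
    linear_combination -(eval_sub_eval_eq_mul_eval_divByMonic_X_sub_C p z u)
  have hq : q.eval z = q.eval u + (z - u) * (q /ₘ (X - C z)).eval u := by
    linear_combination -(eval_sub_eval_eq_mul_eval_divByMonic_X_sub_C q z u)
  rw [hp, hq]
  field_simp
  ring

end CompactSupport

theorem riemann_hilbert_det_eq_one
    (a b : ℝ) (ρ : ℝ → ℝ) (hρ : Integrable ρ)
    (hsupp : Function.support ρ ⊆ Set.Icc a b)
    (n : ℕ) (hn : 1 ≤ n)
    (p q : Polynomial ℝ)
    (hpmonic : p.Monic) (hpdeg : p.natDegree = n)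
    (hqmonic : q.Monic) (hqdeg : q.natDegree = n - 1)
    (hportho : ∀ j : ℕ, j < n → ∫ u : ℝ, p.eval u * u ^ j * ρ u = 0)
    (hqortho : ∀ j : ℕ, j < n - 1 → ∫ u : ℝ, q.eval u * u ^ j * ρ u = 0)
    (z : ℝ) (hz : z ∉ Set.Icc a b) :
    p.eval z * (∫ u : ℝ, q.eval u * ρ u / (z - u)) -
        q.eval z * (∫ u : ℝ, p.eval u * ρ u / (z - u))
      = ∫ u : ℝ, (q.eval u) ^ 2 * ρ u := by
  have hΔp_monic : (p /ₘ (X - C z)).Monic := hpmonic.divByMonic_X_sub_C (by omega) z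
  have hΔp_deg : (p /ₘ (X - C z)).natDegree = n - 1 := by
    rw [natDegree_divByMonic_X_sub_C, hpdeg]
  have hΔq_deg : (q /ₘ (X - C z)).degree < n := by
    refine degree_le_natDegree.trans_lt (Nat.cast_lt.2 ?_)
    rw [natDegree_divByMonic_X_sub_C, hqdeg]
    omega
  have hΔp_sub_q : (p /ₘ (X - C z) - q).degree < ↑(n - 1) :=
    hΔp_deg ▸ hΔp_monic.degree_sub_lt_of_natDegree_eq hqmonic (hΔp_deg.trans hqdeg.symm)
  rw [eval_mul_integral_div_sub_sub_eval_mul_integral_div_sub isCompact_Icc hρ hsupp hz,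
    integral_eval_mul_eval_mul_eq_zero_of_degree_lt isCompact_Icc hρ hsupp hportho hΔq_deg,
    integral_eval_mul_eval_mul_eq_of_degree_sub_lt isCompact_Icc hρ hsupp hqortho hΔp_sub_q, sub_zero]
  simp only [sq]
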